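/- arXiv:math/9810182 — 2 statements merged into one kernel-verified Lean document; each statement's English description precedes it below -/
import Mathlib

section
/- Let q₁, q₂ be coprime odd squarefree positive integers. Let q̄₁ be an integer with q̄₁ q₁ ≡ 1 (mod q₂) and q̄₂ an integer with q̄₂ q₂ ≡ 1 (mod q₁). Then for every integer w: H(w; q₁ q₂) = H(w q̄₁; q₂) · H(w q̄₂; q₁), where the left-hand sum uses the Jacobi symbol χ_{q₁ q₂} and the two right-hand sums use χ_{q₂} and χ_{q₁} respectively. -/
/-- `e_c(x) = exp(2πix/c)`. -/
noncomputable def ec (c : ℕ) (x : ℤ) : ℂ :=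
  Complex.exp (2 * Real.pi * Complex.I * x / c)

/-- The Kloosterman sum `S(m, n; c) = Σ_{a d ≡ 1 (mod c)} e_c(a m + d n)`. -/
noncomputable def kloos (m n : ℤ) (c : ℕ) : ℂ :=
  ∑ a ∈ Finset.range c, ∑ d ∈ Finset.range c,
    if (a * d) % c = 1 % c then ec c (a * m + d * n) else 0

/-- `G(m, m₁, m₂; c)` : complete sum of Kloosterman sums twisted by `χ_q`, for `q ∣ c`. -/
noncomputable def Gsum (q : ℕ) (m m1 m2 : ℤ) (c : ℕ) : ℂ :=
  ∑ a ∈ Finset.range c, ∑ a1 ∈ Finset.range c, ∑ a2 ∈ Finset.range c,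
    (jacobiSym ((a : ℤ) * a1 * a2) q : ℂ) * kloos a ((a1 : ℤ) * a2) c *
      ec c (a * m + a1 * m1 + a2 * m2)

/-- `G'(m, m₁, m₂; c) = e_c(−m m₁ m₂) G(m, m₁, m₂; c)`. -/
noncomputable def Gsum' (q : ℕ) (m m1 m2 : ℤ) (c : ℕ) : ℂ :=
  ec c (-(m * m1 * m2)) * Gsum q m m1 m2 c

/-- `H_r(m, m₁, m₂; q) = Σ_{u,v mod q} χ_q(v (u + v m₁)(v r − m)(u r + m m₁)) e_q(u m₂)`. -/
noncomputable def Hr (r m m1 m2 : ℤ) (q : ℕ) : ℂ :=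
  ∑ u ∈ Finset.range q, ∑ v ∈ Finset.range q,
    (jacobiSym ((v : ℤ) * ((u : ℤ) + v * m1) * ((v : ℤ) * r - m) * ((u : ℤ) * r + m * m1)) q : ℂ) *
      ec q (u * m2)

/-- `H(w; q) = Σ_{u,v mod q} χ_q(u v (u+1)(v+1)) e_q((u v − 1) w)`. -/
noncomputable def Hw (w : ℤ) (q : ℕ) : ℂ :=
  ∑ u ∈ Finset.range q, ∑ v ∈ Finset.range q,
    (jacobiSym ((u : ℤ) * v * ((u : ℤ) + 1) * ((v : ℤ) + 1)) q : ℂ) *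
      ec q (((u : ℤ) * v - 1) * w)

/-- Reduced sum `H*(w; q)`, restricted by `gcd(uv − 1, q) = 1`. -/
noncomputable def Hstar (w : ℤ) (q : ℕ) : ℂ :=
  ∑ u ∈ Finset.range q, ∑ v ∈ Finset.range q,
    if Int.gcd ((u : ℤ) * v - 1) q = 1 then
      (jacobiSym ((u : ℤ) * v * ((u : ℤ) + 1) * ((v : ℤ) + 1)) q : ℂ) *
        ec q (((u : ℤ) * v - 1) * w)
    else 0

/-- The Ramanujan sum `R(n; k) = Σ_{d mod k, (d,k)=1} e_k(d n)`. -/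
noncomputable def Ram (n : ℤ) (k : ℕ) : ℂ :=
  ∑ d ∈ Finset.range k, if Nat.gcd d k = 1 then ec k (d * n) else 0

/-- The Gauss sum `τ(χ_q) = Σ_{x mod q} χ_q(x) e_q(x)`. -/
noncomputable def gaussτ (q : ℕ) : ℂ :=
  ∑ x ∈ Finset.range q, (jacobiSym (x : ℤ) q : ℂ) * ec q (x : ℤ)

/-!
Write `x ↦ (x mod q₁, x mod q₂)` for the Chinese remainder isomorphism
`ℤ/q₁q₂ ≃ ℤ/q₁ × ℤ/q₂`. The Jacobi symbol is multiplicative in the modulus, and since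
`q̄₂ q₂ + q̄₁ q₁ ≡ 1 (mod q₁ q₂)` the additive character splits as
`e_{q₁q₂}(x) = e_{q₁}(x q̄₂) e_{q₂}(x q̄₁)`. Hence the summand of `H(w; q₁q₂)` at `(u, v)` is the
product of the summands of `H(w q̄₂; q₁)` and `H(w q̄₁; q₂)` at the reductions of `(u, v)`, and
summing over `u` and `v` through the Chinese remainder theorem factors the sum.
-/

lemma ec_congr {q : ℕ} [NeZero q] {x y : ℤ} (h : x ≡ y [ZMOD q]) : ec q x = ec q y := by
  unfold ec
  rw [← ZMod.toCircle_intCast, ← ZMod.toCircle_intCast, (ZMod.intCast_eq_intCast_iff x y q).2 h]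

lemma ec_mul_add_mul {q1 q2 : ℕ} [NeZero q1] [NeZero q2] (a b : ℤ) :
    ec (q1 * q2) (a * q2 + b * q1) = ec q1 a * ec q2 b := by
  unfold ec
  rw [← Complex.exp_add]
  congr 1
  field_simp [NeZero.ne (q1 : ℂ), NeZero.ne (q2 : ℂ)]
  push_cast
  ring

lemma ec_mul_of_coprime {q1 q2 : ℕ} [NeZero q1] [NeZero q2] (hco : q1.Coprime q2)
    {qb1 qb2 : ℤ} (hqb1 : (q2 : ℤ) ∣ qb1 * q1 - 1) (hqb2 : (q1 : ℤ) ∣ qb2 * q2 - 1) (x : ℤ) :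
    ec (q1 * q2) x = ec q1 (x * qb2) * ec q2 (x * qb1) := by
  have hdvd : ((q1 * q2 : ℕ) : ℤ) ∣ qb2 * q2 + qb1 * q1 - 1 := by
    push_cast
    refine (Nat.isCoprime_iff_coprime.2 hco).mul_dvd ?_ ?_
    · simpa [add_sub_right_comm] using dvd_add hqb2 (dvd_mul_left (q1 : ℤ) qb1)
    · simpa [add_sub_assoc] using dvd_add (dvd_mul_left (q2 : ℤ) qb2) hqb1
  rw [← ec_mul_add_mul]
  refine ec_congr (Int.modEq_iff_dvd.2 ?_)
  simpa [mul_sub, mul_add, mul_assoc] using dvd_mul_of_dvd_right hdvd x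

noncomputable def hwTerm (w : ℤ) (q : ℕ) (u v : ℤ) : ℂ :=
  (jacobiSym (u * v * (u + 1) * (v + 1)) q : ℂ) * ec q ((u * v - 1) * w)

lemma hwTerm_congr {w : ℤ} {q : ℕ} [NeZero q] {u u' v v' : ℤ} (hu : u ≡ u' [ZMOD q])
    (hv : v ≡ v' [ZMOD q]) : hwTerm w q u v = hwTerm w q u' v' := by
  unfold hwTerm
  rw [jacobiSym.mod_left' (((hu.mul hv).mul (hu.add_right 1)).mul (hv.add_right 1)),
    ec_congr (((hu.mul hv).sub_right 1).mul_right w)]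

lemma hwTerm_mul_of_coprime {q1 q2 : ℕ} [NeZero q1] [NeZero q2] (hco : q1.Coprime q2)
    {qb1 qb2 : ℤ} (hqb1 : (q2 : ℤ) ∣ qb1 * q1 - 1) (hqb2 : (q1 : ℤ) ∣ qb2 * q2 - 1)
    (w u v : ℤ) :
    hwTerm w (q1 * q2) u v = hwTerm (w * qb2) q1 u v * hwTerm (w * qb1) q2 u v := by
  unfold hwTerm
  rw [jacobiSym.mul_right, ec_mul_of_coprime hco hqb1 hqb2]
  push_cast
  ring_nf

lemma Hw_eq_sum_zmod (w : ℤ) (q : ℕ) [NeZero q] :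
    Hw w q = ∑ u : ZMod q, ∑ v : ZMod q, hwTerm w q u.val v.val := by
  obtain ⟨n, rfl⟩ := Nat.exists_eq_succ_of_ne_zero (NeZero.ne q)
  simp only [Hw, hwTerm, ← Fin.sum_univ_eq_sum_range]
  rfl

lemma ZMod.sum_mul_eq_mul_sum_of_coprime {q1 q2 : ℕ} [NeZero q1] [NeZero q2]
    (hco : q1.Coprime q2) {f g : ℤ → ℂ} (hf : ∀ x y, x ≡ y [ZMOD q1] → f x = f y)
    (hg : ∀ x y, x ≡ y [ZMOD q2] → g x = g y) :
    ∑ x : ZMod (q1 * q2), f x.val * g x.val = (∑ x : ZMod q1, f x.val) * ∑ x : ZMod q2, g x.val := by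
  have val_cast {n : ℕ} [NeZero n] (x : ZMod (q1 * q2)) :
      ((ZMod.cast x : ZMod n).val : ℤ) ≡ x.val [ZMOD n] := by
    rw [← ZMod.intCast_eq_intCast_iff]
    push_cast
    rw [ZMod.natCast_zmod_val, ZMod.cast_eq_val]
  let e := (ZMod.chineseRemainder hco).toEquiv
  calc ∑ x : ZMod (q1 * q2), f x.val * g x.val
      = ∑ x : ZMod (q1 * q2), f (e x).1.val * g (e x).2.val := by
        refine Fintype.sum_congr _ _ fun x => ?_
        have he : e x = (ZMod.cast x, ZMod.cast x) := by ext <;> simp [e, ZMod.chineseRemainder]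
        rw [he, hf _ _ (val_cast x), hg _ _ (val_cast x)]
    _ = ∑ p : ZMod q1 × ZMod q2, f p.1.val * g p.2.val := e.sum_comp fun p => f p.1.val * g p.2.val
    _ = _ := by rw [Fintype.sum_prod_type, Fintype.sum_mul_sum]

theorem Hw_mul_general (q1 q2 : ℕ) (h1 : 0 < q1) (h2 : 0 < q2) (hco : Nat.Coprime q1 q2)
    (qb1 qb2 : ℤ) (hqb1 : (q2 : ℤ) ∣ (qb1 * q1 - 1)) (hqb2 : (q1 : ℤ) ∣ (qb2 * q2 - 1))
    (w : ℤ) :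
    Hw w (q1 * q2) = Hw (w * qb1) q2 * Hw (w * qb2) q1 := by
  have : NeZero q1 := ⟨h1.ne'⟩
  have : NeZero q2 := ⟨h2.ne'⟩
  have sum_v (u : ℤ) : ∑ v : ZMod (q1 * q2), hwTerm w (q1 * q2) u v.val =
      (∑ v : ZMod q1, hwTerm (w * qb2) q1 u v.val) * ∑ v : ZMod q2, hwTerm (w * qb1) q2 u v.val := by
    simp only [hwTerm_mul_of_coprime hco hqb1 hqb2]
    exact ZMod.sum_mul_eq_mul_sum_of_coprime hco (fun _ _ h => hwTerm_congr rfl h)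
      (fun _ _ h => hwTerm_congr rfl h)
  rw [mul_comm (Hw _ q2)]
  simp only [Hw_eq_sum_zmod, sum_v]
  exact ZMod.sum_mul_eq_mul_sum_of_coprime hco
    (f := fun u => ∑ v : ZMod q1, hwTerm (w * qb2) q1 u v.val)
    (g := fun u => ∑ v : ZMod q2, hwTerm (w * qb1) q2 u v.val)
    (fun _ _ h => Finset.sum_congr rfl fun _ _ => hwTerm_congr h rfl)
    (fun _ _ h => Finset.sum_congr rfl fun _ _ => hwTerm_congr h rfl)

/-- twisted multiplicativity of `H(w; q)` in the modulus: for coprime odd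
squarefree `q₁, q₂`, `H(w; q₁ q₂) = H(w q̄₁; q₂) ⬝ H(w q̄₂; q₁)`. -/
theorem Hw_mul (q1 q2 : ℕ) (h1 : 0 < q1) (h2 : 0 < q2) (hodd1 : Odd q1) (hodd2 : Odd q2)
    (hsf1 : Squarefree q1) (hsf2 : Squarefree q2) (hco : Nat.Coprime q1 q2)
    (qb1 qb2 : ℤ) (hqb1 : (q2 : ℤ) ∣ (qb1 * q1 - 1)) (hqb2 : (q1 : ℤ) ∣ (qb2 * q2 - 1))
    (w : ℤ) :
    Hw w (q1 * q2) = Hw (w * qb1) q2 * Hw (w * qb2) q1 :=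
  Hw_mul_general q1 q2 h1 h2 hco qb1 qb2 hqb1 hqb2 w
end

section
/- Let q > 1 be odd and squarefree, r ≥ 1 an integer, and c = q r. Then for all integers m, m₁, m₂: |G(m, m₁, m₂; c)| ≤ q³ r². -/
/-!
Opening the Kloosterman sum, `G` becomes a sum over the pairs `x y ≡ 1 (mod c)` of
`F(x + m) · Σ_a χ_q(a) e_c(a m₂) F(y a + m₁)`, where `F(t) = Σ_{a mod c} χ_q(a) e_c(a t)`.
Writing `a = u + q s` shows that `F(t) = 0` unless `r ∣ t`, and that `F(r t) = r g(t)` with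
`g(t) = Σ_{u mod q} χ_q(u) e_q(u t)`. For odd squarefree `q`, `g(t)` vanishes when
`gcd(t, q) > 1` (some unit `u` with `χ_q(u) = -1` fixes `t`) and has the modulus of `g(1)`
otherwise, so Parseval, `Σ_t |g(t)|² = q φ(q)`, gives `|g(t)| ≤ √q`.
When `y` is coprime to `r`, only `q` residues `a mod c` have `r ∣ y a + m₁`, so each factor is
at most `q · r √q`; and `x` determines `y`.
-/

open Finset
open ZMod (stdAddChar)

lemma ec_add (c : ℕ) (x y : ℤ) : ec c (x + y) = ec c x * ec c y := by
  rw [ec, ec, ec, ← Complex.exp_add]; congr 1; push_cast; ring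

lemma ec_eq_stdAddChar (c : ℕ) [NeZero c] (x : ℤ) : ec c x = ZMod.stdAddChar (x : ZMod c) :=
  (ZMod.stdAddChar_coe x).symm

lemma norm_ec (c : ℕ) (x : ℤ) : ‖ec c x‖ = 1 := by
  rw [ec, Complex.norm_exp]
  simp

lemma ec_mul_mul {p : ℕ} (hp : p ≠ 0) (n : ℕ) (x : ℤ) : ec (p * n) (p * x) = ec n x := by
  rw [ec, ec]
  congr 1
  have : (p : ℂ) ≠ 0 := by exact_mod_cast hp
  rcases eq_or_ne (n : ℂ) 0 with hn | hn
  · simp [hn]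
  · push_cast
    field_simp

lemma sum_range_eq_sum_zmod {n : ℕ} [NeZero n] {M : Type*} [AddCommMonoid M] (f : ZMod n → M) :
    ∑ i ∈ range n, f i = ∑ x : ZMod n, f x := by
  rw [Finset.sum_range]
  refine Fintype.sum_equiv (ZMod.finEquiv n).toEquiv _ _ fun i => ?_
  cases n with
  | zero => exact absurd rfl (NeZero.ne 0)
  | succ n => exact congrArg f (Fin.cast_val_eq_self i)

lemma sum_range_ec_mul {n : ℕ} (hn : n ≠ 0) (k : ℤ) :
    ∑ t ∈ range n, ec n (k * t) = if (n : ℤ) ∣ k then (n : ℂ) else 0 := by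
  have : NeZero n := ⟨hn⟩
  classical
  have h := AddChar.sum_mulShift (k : ZMod n) (ZMod.isPrimitive_stdAddChar n)
  simp_rw [ZMod.card, ZMod.intCast_zmod_eq_zero_iff_dvd] at h
  push_cast at h
  rw [← h, ← sum_range_eq_sum_zmod]
  refine sum_congr rfl fun t _ => ?_
  rw [ec_eq_stdAddChar, mul_comm]
  push_cast; rfl

lemma sum_range_mul_eq_sum_sum {M : Type*} [AddCommMonoid M] (a b : ℕ) (f : ℕ → M) :
    ∑ i ∈ range (a * b), f i = ∑ u ∈ range a, ∑ s ∈ range b, f (u + a * s) := by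
  induction b with
  | zero => simp
  | succ b ih =>
    rw [mul_add_one, sum_range_add, ih, ← sum_add_distrib]
    refine sum_congr rfl fun u _ => ?_
    rw [sum_range_succ, add_comm (a * b)]

lemma card_filter_dvd_mul_add_le (q : ℕ) {r y : ℕ} (hy : y.Coprime r) (w : ℤ) :
    #{x ∈ range (q * r) | (r : ℤ) ∣ y * ((x : ℕ) : ℤ) + w} ≤ q := by
  rcases r.eq_zero_or_pos with rfl | hr
  · simp
  rcases eq_empty_or_nonempty {x ∈ range (q * r) | (r : ℤ) ∣ y * ((x : ℕ) : ℤ) + w} with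
    h | ⟨x₀, hx₀⟩
  · simp [h]
  have hres : {x ∈ range (q * r) | (r : ℤ) ∣ y * ((x : ℕ) : ℤ) + w} ⊆
      {x ∈ range (q * r) | x ≡ x₀ [MOD r]} := by
    intro x hx
    simp only [mem_filter] at hx hx₀ ⊢
    refine ⟨hx.1, Nat.modEq_iff_dvd.mpr ?_⟩
    have := dvd_sub hx₀.2 hx.2
    rw [add_sub_add_right_eq_sub, ← mul_sub] at this
    exact (Nat.isCoprime_iff_coprime.mpr hy.symm).dvd_of_dvd_mul_left this
  calc _ ≤ #{x ∈ range (q * r) | x ≡ x₀ [MOD r]} := card_le_card hres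
    _ = q := by
      rw [← Nat.count_eq_card_filter_range, Nat.count_modEq_card _ hr]
      simp [hr.ne']

section GaussSum

variable {N : ℕ} [NeZero N]

lemma norm_gaussSum_mulShift_of_isUnit (χ : DirichletCharacter ℂ N) (ψ : AddChar (ZMod N) ℂ)
    {a : ZMod N} (ha : IsUnit a) : ‖gaussSum χ (ψ.mulShift a)‖ = ‖gaussSum χ ψ‖ := by
  rw [← gaussSum_mulShift χ ψ ha.unit, norm_mul, χ.unit_norm_eq_one, one_mul, ha.unit_spec]

lemma ZMod.card_filter_isUnit : #{x : ZMod N | IsUnit x} = N.totient := by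
  classical
  rw [card_filter, ← sum_range_eq_sum_zmod (fun x : ZMod N => if IsUnit x then 1 else 0)]
  simp_rw [ZMod.isUnit_iff_coprime, ← card_filter, Nat.totient_eq_card_coprime, Nat.coprime_comm]

lemma DirichletCharacter.sum_norm_sq (χ : DirichletCharacter ℂ N) :
    ∑ x, ‖χ x‖ ^ 2 = N.totient := by
  classical
  have (x : ZMod N) : ‖χ x‖ ^ 2 = if IsUnit x then 1 else 0 := by
    split_ifs with hx
    · rw [← hx.unit_spec, χ.unit_norm_eq_one, one_pow]
    · rw [χ.map_nonunit hx, norm_zero, zero_pow two_ne_zero]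
  simp_rw [this, sum_boole, ZMod.card_filter_isUnit]

lemma ZMod.conj_stdAddChar (x : ZMod N) : (starRingEnd ℂ) (stdAddChar x) = stdAddChar (-x) := by
  rw [AddChar.starComp_apply (by rw [ZMod.ringChar_zmod_n]; exact Nat.pos_of_neZero N),
    AddChar.inv_apply]

lemma DirichletCharacter.sum_norm_sq_gaussSum_mulShift (χ : DirichletCharacter ℂ N) :
    ∑ a, ‖gaussSum χ (stdAddChar.mulShift a)‖ ^ 2 = N * N.totient := by
  classical
  have h_orth (x y : ZMod N) :
      ∑ a, stdAddChar (a * (x - y)) = if y = x then (N : ℂ) else 0 := by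
    rw [AddChar.sum_mulShift _ (ZMod.isPrimitive_stdAddChar N), ZMod.card]
    simp [sub_eq_zero, eq_comm]
  have h_sq (a : ZMod N) : (‖gaussSum χ (stdAddChar.mulShift a)‖ ^ 2 : ℂ) =
      ∑ x, ∑ y, χ x * (starRingEnd ℂ) (χ y) * stdAddChar (a * (x - y)) := by
    rw [← Complex.mul_conj', gaussSum, map_sum, sum_mul_sum]
    refine sum_congr rfl fun x _ => sum_congr rfl fun y _ => ?_
    rw [map_mul, AddChar.mulShift_apply, AddChar.mulShift_apply, ZMod.conj_stdAddChar, mul_sub,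
      sub_eq_add_neg, AddChar.map_add_eq_mul]
    ring
  have h_diag (x : ZMod N) :
      ∑ a, ∑ y, χ x * (starRingEnd ℂ) (χ y) * stdAddChar (a * (x - y)) =
        N * ‖χ x‖ ^ 2 := by
    rw [sum_comm]
    simp_rw [← Finset.mul_sum]
    rw [sum_congr rfl fun y _ => by rw [h_orth x y, mul_ite, mul_zero], sum_ite_eq' univ x,
      if_pos (mem_univ x), Complex.mul_conj']
    ring
  apply Complex.ofReal_injective
  push_cast
  simp_rw [h_sq]
  rw [sum_comm]
  simp_rw [h_diag, ← mul_sum]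
  exact_mod_cast congrArg (fun t : ℝ => (N : ℂ) * t) χ.sum_norm_sq

end GaussSum

section JacobiChar

variable {q : ℕ} [NeZero q]

lemma jacobiSym_val_intCast (n : ℤ) : jacobiSym ((n : ZMod q).val : ℤ) q = jacobiSym n q := by
  rw [ZMod.val_intCast, ← jacobiSym.mod_left]

variable (q) in
noncomputable def jacobiChar : DirichletCharacter ℂ q where
  toFun x := jacobiSym (x.val : ℤ) q
  map_one' := by
    rw [← Int.cast_one, jacobiSym_val_intCast, jacobiSym.one_left, Int.cast_one]
  map_mul' x y := by
    have : x * y = (((x.val : ℤ) * y.val : ℤ) : ZMod q) := by simp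
    show (jacobiSym _ q : ℂ) = _
    rw [this, jacobiSym_val_intCast, jacobiSym.mul_left, Int.cast_mul]
  map_nonunit' x hx := by
    rw [← ZMod.natCast_zmod_val x, ZMod.isUnit_iff_coprime] at hx
    have : Int.gcd (x.val : ℤ) q ≠ 1 := by rwa [Int.gcd_natCast_natCast]
    show (jacobiSym _ q : ℂ) = _
    rw [jacobiSym.eq_zero_iff_not_coprime.mpr this, Int.cast_zero]

lemma jacobiChar_intCast (n : ℤ) : jacobiChar q n = jacobiSym n q :=
  congrArg (fun z : ℤ => (z : ℂ)) (jacobiSym_val_intCast n)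

lemma jacobiChar_natCast (n : ℕ) : jacobiChar q n = jacobiSym n q := by
  exact_mod_cast jacobiChar_intCast (n : ℤ)

lemma exists_jacobiSym_eq_neg_one {p : ℕ} [Fact p.Prime] (hp : p ≠ 2) :
    ∃ n : ℕ, jacobiSym n p = -1 := by
  obtain ⟨a, ha⟩ := FiniteField.exists_nonsquare (F := ZMod p) (by rwa [ZMod.ringChar_zmod_n])
  refine ⟨a.val, ?_⟩
  rw [← jacobiSym.legendreSym.to_jacobiSym, legendreSym.eq_neg_one_iff', ZMod.natCast_zmod_val]
  exact ha

/-- Take `u ≡ 1` modulo `q / p` and a non-residue modulo a prime `p ∣ gcd(a, q)`. -/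
lemma exists_jacobiChar_eq_neg_one_mul_eq (hodd : Odd q) (hsf : Squarefree q) {a : ZMod q}
    (ha : ¬IsUnit a) : ∃ u, jacobiChar q u = -1 ∧ a * u = a := by
  rw [← ZMod.natCast_zmod_val a, ZMod.isUnit_iff_coprime] at ha
  obtain ⟨p, hp, hpa, hpq⟩ := Nat.Prime.not_coprime_iff_dvd.mp ha
  have := Fact.mk hp
  obtain ⟨q₁, rfl⟩ := hpq
  have hcop : p.Coprime q₁ := Nat.coprime_of_squarefree_mul hsf
  have hp2 : p ≠ 2 := by
    rintro rfl
    exact Nat.not_even_iff_odd.mpr hodd (even_two_mul q₁)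
  have hq₁ : q₁ ≠ 0 := right_ne_zero_of_mul (NeZero.ne (p * q₁))
  obtain ⟨n, hn⟩ := exists_jacobiSym_eq_neg_one hp2
  obtain ⟨k, hkp, hkq₁⟩ := Nat.chineseRemainder hcop n 1
  refine ⟨k, ?_, ?_⟩
  · rw [jacobiChar_natCast, jacobiSym.mul_right' _ hp.ne_zero hq₁,
      jacobiSym.mod_left' (b := p) (a₂ := n) (by exact_mod_cast hkp),
      jacobiSym.mod_left' (b := q₁) (a₂ := 1) (by exact_mod_cast hkq₁), hn,
      jacobiSym.one_left]
    norm_num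
  · have hp_dvd : a.val * k ≡ a.val [MOD p] :=
      (Nat.modEq_zero_iff_dvd.mpr (dvd_mul_of_dvd_left hpa k)).trans
        (Nat.modEq_zero_iff_dvd.mpr hpa).symm
    have hq₁_dvd : a.val * k ≡ a.val [MOD q₁] := by simpa using hkq₁.mul_left a.val
    have := (ZMod.natCast_eq_natCast_iff _ _ _).mpr
      ((Nat.modEq_and_modEq_iff_modEq_mul hcop).mp ⟨hp_dvd, hq₁_dvd⟩)
    rwa [Nat.cast_mul, ZMod.natCast_zmod_val] at this

lemma gaussSum_jacobiChar_mulShift_eq_zero (hodd : Odd q) (hsf : Squarefree q) {a : ZMod q}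
    (ha : ¬IsUnit a) : gaussSum (jacobiChar q) (stdAddChar.mulShift a) = 0 := by
  obtain ⟨u, hu, hau⟩ := exists_jacobiChar_eq_neg_one_mul_eq hodd hsf ha
  have hunit : IsUnit u := by
    by_contra h
    rw [(jacobiChar q).map_nonunit h] at hu
    norm_num at hu
  have := gaussSum_mulShift (jacobiChar q) (stdAddChar.mulShift a) hunit.unit
  rwa [hunit.unit_spec, hu, AddChar.mulShift_mulShift, hau, neg_one_mul,
    CharZero.neg_eq_self_iff] at this

lemma norm_gaussSum_jacobiChar (hodd : Odd q) (hsf : Squarefree q) :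
    ‖gaussSum (jacobiChar q) stdAddChar‖ = √q := by
  classical
  have h := (jacobiChar q).sum_norm_sq_gaussSum_mulShift
  have (a : ZMod q) : ‖gaussSum (jacobiChar q) (stdAddChar.mulShift a)‖ ^ 2 =
      if IsUnit a then ‖gaussSum (jacobiChar q) stdAddChar‖ ^ 2 else 0 := by
    split_ifs with ha
    · rw [norm_gaussSum_mulShift_of_isUnit _ _ ha]
    · rw [gaussSum_jacobiChar_mulShift_eq_zero hodd hsf ha, norm_zero, zero_pow two_ne_zero]
  simp_rw [this, ← sum_filter, sum_const, ZMod.card_filter_isUnit, nsmul_eq_mul] at h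
  have hφ : (q.totient : ℝ) ≠ 0 := by
    exact_mod_cast (Nat.totient_pos.mpr (Nat.pos_of_neZero q)).ne'
  rw [← Real.sqrt_sq (norm_nonneg _)]
  exact congrArg _ (mul_left_cancel₀ hφ (h.trans (mul_comm _ _)))

lemma norm_gaussSum_jacobiChar_mulShift_le (hodd : Odd q) (hsf : Squarefree q) (a : ZMod q) :
    ‖gaussSum (jacobiChar q) (stdAddChar.mulShift a)‖ ≤ √q := by
  by_cases ha : IsUnit a
  · rw [norm_gaussSum_mulShift_of_isUnit _ _ ha, norm_gaussSum_jacobiChar hodd hsf]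
  · rw [gaussSum_jacobiChar_mulShift_eq_zero hodd hsf ha, norm_zero]
    positivity

end JacobiChar

noncomputable def jacobiCharSum (q c : ℕ) (t : ℤ) : ℂ :=
  ∑ a ∈ range c, (jacobiSym a q : ℂ) * ec c (a * t)

section JacobiCharSum

variable {q r : ℕ}

lemma jacobiCharSum_self_eq_gaussSum [NeZero q] (t : ℤ) :
    jacobiCharSum q q t = gaussSum (jacobiChar q) (stdAddChar.mulShift (t : ZMod q)) := by
  rw [jacobiCharSum, gaussSum, ← sum_range_eq_sum_zmod]
  refine sum_congr rfl fun a _ => ?_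
  rw [jacobiChar_natCast, AddChar.mulShift_apply, ec_eq_stdAddChar, mul_comm (t : ZMod q)]
  push_cast
  rfl

lemma jacobiCharSum_mul_eq (hq : q ≠ 0) (t : ℤ) :
    jacobiCharSum q (q * r) t = (∑ u ∈ range q, (jacobiSym u q : ℂ) * ec (q * r) (u * t)) *
      ∑ s ∈ range r, ec r (t * s) := by
  rw [jacobiCharSum, sum_range_mul_eq_sum_sum, sum_mul]
  refine sum_congr rfl fun u _ => ?_
  rw [mul_sum]
  refine sum_congr rfl fun s _ => ?_
  have hχ : jacobiSym ((u + q * s : ℕ) : ℤ) q = jacobiSym u q :=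
    jacobiSym.mod_left' (by push_cast; exact Int.add_mul_emod_self_left _ _ _)
  have he : ((u + q * s : ℕ) : ℤ) * t = u * t + q * (t * s) := by push_cast; ring
  rw [hχ, he, ec_add, ec_mul_mul hq, mul_assoc]

lemma jacobiCharSum_eq_zero_of_not_dvd (hq : q ≠ 0) (hr : r ≠ 0) {t : ℤ}
    (ht : ¬(r : ℤ) ∣ t) : jacobiCharSum q (q * r) t = 0 := by
  rw [jacobiCharSum_mul_eq hq, sum_range_ec_mul hr, if_neg ht, mul_zero]

lemma jacobiCharSum_mul_mul (hq : q ≠ 0) (hr : r ≠ 0) (t : ℤ) :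
    jacobiCharSum q (q * r) (r * t) = r * jacobiCharSum q q t := by
  rw [jacobiCharSum_mul_eq hq, sum_range_ec_mul hr, if_pos (dvd_mul_right _ _), mul_comm,
    jacobiCharSum]
  congr 1
  refine sum_congr rfl fun u _ => ?_
  rw [mul_left_comm (u : ℤ), mul_comm q r, ec_mul_mul hr]

lemma norm_jacobiCharSum_le (hodd : Odd q) (hsf : Squarefree q) (hr : r ≠ 0) (t : ℤ) :
    ‖jacobiCharSum q (q * r) t‖ ≤ r * √q := by
  have : NeZero q := ⟨hodd.pos.ne'⟩
  by_cases ht : (r : ℤ) ∣ t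
  · obtain ⟨t, rfl⟩ := ht
    rw [jacobiCharSum_mul_mul hodd.pos.ne' hr, norm_mul, Complex.norm_natCast,
      jacobiCharSum_self_eq_gaussSum]
    gcongr
    exact norm_gaussSum_jacobiChar_mulShift_le hodd hsf _
  · rw [jacobiCharSum_eq_zero_of_not_dvd hodd.pos.ne' hr ht, norm_zero]
    positivity

lemma sum_norm_jacobiCharSum_le (hodd : Odd q) (hsf : Squarefree q) {y : ℕ} (hr : r ≠ 0)
    (hy : y.Coprime r) (w : ℤ) :
    ∑ x ∈ range (q * r), ‖jacobiCharSum q (q * r) (y * x + w)‖ ≤ q * (r * √q) := by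
  rw [← sum_filter_of_ne (p := fun x : ℕ => (r : ℤ) ∣ y * (x : ℤ) + w) fun x _ hx =>
    not_not.mp fun h => hx (by rw [jacobiCharSum_eq_zero_of_not_dvd hodd.pos.ne' hr h, norm_zero])]
  calc _ ≤ #{x ∈ range (q * r) | (r : ℤ) ∣ y * ((x : ℕ) : ℤ) + w} • (r * √q) :=
        sum_le_card_nsmul _ _ _ fun x _ => norm_jacobiCharSum_le hodd hsf hr _
    _ ≤ q * (r * √q) := by
        rw [nsmul_eq_mul]
        gcongr
        exact_mod_cast card_filter_dvd_mul_add_le q hy w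

lemma norm_sum_mul_jacobiCharSum_le {y : ℕ} (hodd : Odd q) (hsf : Squarefree q) (hr : r ≠ 0)
    (hy : y.Coprime r) (w w' : ℤ) :
    ‖∑ a ∈ range (q * r), (jacobiSym a q : ℂ) * ec (q * r) (a * w') *
      jacobiCharSum q (q * r) (y * a + w)‖ ≤ q * (r * √q) := by
  have : NeZero q := ⟨hodd.pos.ne'⟩
  refine (norm_sum_le _ _).trans <|
    (sum_le_sum fun a _ => ?_).trans (sum_norm_jacobiCharSum_le hodd hsf hr hy w)
  rw [norm_mul, norm_mul, norm_ec, mul_one, ← jacobiChar_natCast]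
  exact mul_le_of_le_one_left (norm_nonneg _) ((jacobiChar q).norm_le_one _)

end JacobiCharSum

def kloostermanPairs (c : ℕ) : Finset (ℕ × ℕ) :=
  {p ∈ range c ×ˢ range c | p.1 * p.2 % c = 1 % c}

lemma kloos_eq_sum_kloostermanPairs (m n : ℤ) (c : ℕ) :
    kloos m n c = ∑ p ∈ kloostermanPairs c, ec c (p.1 * m + p.2 * n) := by
  rw [kloos, kloostermanPairs, sum_filter, sum_product]

lemma injOn_fst_kloostermanPairs (c : ℕ) :
    Set.InjOn Prod.fst (kloostermanPairs c : Set (ℕ × ℕ)) := by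
  rintro ⟨x, y⟩ hy ⟨x', y'⟩ hy' (rfl : x = x')
  simp only [kloostermanPairs, mem_coe, mem_filter, mem_product, mem_range] at hy hy'
  have h : (x * y : ZMod c) = 1 := by
    exact_mod_cast (ZMod.natCast_eq_natCast_iff' _ _ _).mpr hy.2
  have h' : (x * y' : ZMod c) = 1 := by
    exact_mod_cast (ZMod.natCast_eq_natCast_iff' _ _ _).mpr hy'.2
  have : (y : ZMod c) = y' := by
    calc (y : ZMod c) = y * (x * y') := by rw [h', mul_one]
      _ = (x * y) * y' := by ring
      _ = y' := by rw [h, one_mul]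
  rw [ZMod.natCast_eq_natCast_iff', Nat.mod_eq_of_lt hy.1.2, Nat.mod_eq_of_lt hy'.1.2] at this
  rw [this]

lemma coprime_snd_of_mem_kloostermanPairs {c : ℕ} {p : ℕ × ℕ}
    (hp : p ∈ kloostermanPairs c) : p.2.Coprime c := by
  simp only [kloostermanPairs, mem_filter] at hp
  exact Nat.coprime_of_mul_modEq_one p.1 (by rw [Nat.ModEq, mul_comm]; exact hp.2)

lemma Gsum_eq_sum_kloostermanPairs (q c : ℕ) (m m1 m2 : ℤ) :
    Gsum q m m1 m2 c = ∑ p ∈ kloostermanPairs c, jacobiCharSum q c (p.1 + m) *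
      ∑ a ∈ range c, (jacobiSym a q : ℂ) * ec c (a * m2) *
        jacobiCharSum q c (p.2 * a + m1) := by
  conv_lhs => simp only [Gsum, kloos_eq_sum_kloostermanPairs, mul_sum, sum_mul]
  simp_rw [sum_comm (s := range c) (t := kloostermanPairs c)]
  refine sum_congr rfl fun p _ => ?_
  rw [jacobiCharSum, sum_mul]
  refine sum_congr rfl fun a _ => ?_
  rw [sum_comm, mul_sum]
  refine sum_congr rfl fun a2 _ => ?_
  rw [jacobiCharSum, mul_sum, mul_sum]
  refine sum_congr rfl fun a1 _ => ?_
  have he : ec c (p.1 * a + p.2 * (a1 * a2)) * ec c (a * m + a1 * m1 + a2 * m2) =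
      ec c (a * (p.1 + m)) * (ec c (a2 * m2) * ec c (a1 * (p.2 * a2 + m1))) := by
    simp only [← ec_add]
    ring_nf
  simp only [jacobiSym.mul_left, Int.cast_mul]
  linear_combination (↑(jacobiSym a q) * ↑(jacobiSym a1 q) * ↑(jacobiSym a2 q) : ℂ) * he

lemma sum_kloostermanPairs_fst_le (c : ℕ) {g : ℕ → ℝ} (hg : ∀ x, 0 ≤ g x) :
    ∑ p ∈ kloostermanPairs c, g p.1 ≤ ∑ x ∈ range c, g x := by
  rw [← sum_image (injOn_fst_kloostermanPairs c)]
  refine sum_le_sum_of_subset_of_nonneg (fun x hx => ?_) fun x _ _ => hg x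
  obtain ⟨p, hp, rfl⟩ := mem_image.mp hx
  exact (mem_product.mp (mem_filter.mp hp).1).1

theorem Gsum_bound_general (q r : ℕ) (hodd : Odd q) (hsf : Squarefree q) (hr : 1 ≤ r)
    (m m1 m2 : ℤ) :
    ‖Gsum q m m1 m2 (q * r)‖ ≤ (q : ℝ) ^ 3 * (r : ℝ) ^ 2 := by
  have hr0 : r ≠ 0 := Nat.one_le_iff_ne_zero.mp hr
  set D : ℝ := q * (r * √q)
  have hpair (p : ℕ × ℕ) (hp : p ∈ kloostermanPairs (q * r)) :
      ‖jacobiCharSum q (q * r) (p.1 + m) * ∑ a ∈ range (q * r), (jacobiSym a q : ℂ) *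
        ec (q * r) (a * m2) * jacobiCharSum q (q * r) (p.2 * a + m1)‖ ≤
      ‖jacobiCharSum q (q * r) (p.1 + m)‖ * D := by
    rw [norm_mul]
    gcongr
    exact norm_sum_mul_jacobiCharSum_le hodd hsf hr0
      ((coprime_snd_of_mem_kloostermanPairs hp).coprime_dvd_right (dvd_mul_left r q)) m1 m2
  have hfst : ∑ x ∈ range (q * r), ‖jacobiCharSum q (q * r) (x + m)‖ ≤ D := by
    simpa using sum_norm_jacobiCharSum_le hodd hsf hr0 (Nat.coprime_one_left r) m
  rw [Gsum_eq_sum_kloostermanPairs]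
  calc _ ≤ ∑ p ∈ kloostermanPairs (q * r), ‖jacobiCharSum q (q * r) (p.1 + m)‖ * D :=
        (norm_sum_le _ _).trans (sum_le_sum hpair)
    _ ≤ D * D := by
        rw [← sum_mul]
        gcongr
        exact (sum_kloostermanPairs_fst_le _ fun x => norm_nonneg _).trans hfst
    _ = q ^ 3 * r ^ 2 := by
        rw [show D * D = q ^ 2 * r ^ 2 * √q ^ 2 by ring, Real.sq_sqrt (Nat.cast_nonneg q)]
        ring

/-- Corollary 10.3: for `q > 1` odd squarefree, `r ≥ 1` and `c = q r`,
`|G(m, m₁, m₂; c)| ≤ q³ r²`. -/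
theorem Gsum_bound (q r : ℕ) (hq : 1 < q) (hodd : Odd q) (hsf : Squarefree q) (hr : 1 ≤ r)
    (m m1 m2 : ℤ) :
    ‖Gsum q m m1 m2 (q * r)‖ ≤ (q : ℝ) ^ 3 * (r : ℝ) ^ 2 :=
  Gsum_bound_general q r hodd hsf hr m m1 m2
end
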